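/- In full StraTT (including floating nondependent function types), cumulativity holds: if Δ; Γ ⊢ a :^j A and j ≤ k, then Δ; Γ ⊢ a :^k A. -/
import Mathlib


/-! Syntax of StraTT: a single universe ⋆, variables, displaced constants,
stratified dependent function types `Πx:^j A. B`, floating nondependent
function types `A → B`, abstractions, applications, the empty type and its
eliminator. Levels are natural numbers. -/

inductive Tm : Type
  | star
  | var (x : ℕ)
  | const (x : ℕ) (i : ℕ)
  | pi (j : ℕ) (x : ℕ) (A B : Tm)
  | arrow (A B : Tm)
  | lam (x : ℕ) (b : Tm)
  | app (b a : Tm)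
  | bot
  | absurd (b : Tm)
  deriving DecidableEq

namespace Tm

/-- Substitution `a{u/x}` of the term `u` for the variable `x`. -/
def subst (x : ℕ) (u : Tm) : Tm → Tm
  | star => star
  | var y => if y = x then u else var y
  | const y i => const y i
  | pi j y A B => pi j y (subst x u A) (if y = x then B else subst x u B)
  | arrow A B => arrow (subst x u A) (subst x u B)
  | lam y b => lam y (if y = x then b else subst x u b)
  | app b a => app (subst x u b) (subst x u a)
  | bot => bot
  | absurd b => absurd (subst x u b)

/-- Displacement `a^{+i}`: uniformly increment every level annotation by `i`. -/
def incr (i : ℕ) : Tm → Tm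
  | star => star
  | var y => var y
  | const y j => const y (i + j)
  | pi j y A B => pi (i + j) y (incr i A) (incr i B)
  | arrow A B => arrow (incr i A) (incr i B)
  | lam y b => lam y (incr i b)
  | app b a => app (incr i b) (incr i a)
  | bot => bot
  | absurd b => absurd (incr i b)

end Tm

/-- A signature entry `x :^k A := a` (name, level, type, definition). -/
abbrev Sig := List (ℕ × ℕ × Tm × Tm)
/-- A context entry `x :^k A` (name, level, type); head is the most recent. -/
abbrev Ctx := List (ℕ × ℕ × Tm)

def lookupSig : Sig → ℕ → Option (ℕ × Tm × Tm)
  | [], _ => none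
  | (y, k, A, a) :: Δ, x => if x = y then some (k, A, a) else lookupSig Δ x

def lookupCtx : Ctx → ℕ → Option (ℕ × Tm)
  | [], _ => none
  | (y, k, A) :: Γ, x => if x = y then some (k, A) else lookupCtx Γ x

/-- Untyped definitional equality `Δ ⊢ a ≡ b`. -/
inductive DEq (Δ : Sig) : Tm → Tm → Prop
  | refl (a) : DEq Δ a a
  | sym : DEq Δ a b → DEq Δ b a
  | trans : DEq Δ a b → DEq Δ b c → DEq Δ a c
  | beta (x b a) : DEq Δ (.app (.lam x b) a) (Tm.subst x a b)
  | delta {x i k A a} : lookupSig Δ x = some (k, A, a) → DEq Δ (.const x i) (Tm.incr i a)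
  | pi {j x A A' B B'} : DEq Δ A A' → DEq Δ B B' → DEq Δ (.pi j x A B) (.pi j x A' B')
  | arrow {A A' B B'} : DEq Δ A A' → DEq Δ B B' → DEq Δ (.arrow A B) (.arrow A' B')
  | lam {x b b'} : DEq Δ b b' → DEq Δ (.lam x b) (.lam x b')
  | app {b b' a a'} : DEq Δ b b' → DEq Δ a a' → DEq Δ (.app b a) (.app b' a')
  | absurd {b b'} : DEq Δ b b' → DEq Δ (.absurd b) (.absurd b')

mutual
  /-- Well-formed signatures `⊢ Δ`. -/
  inductive SigWf : Sig → Prop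
    | nil : SigWf []
    | cons {Δ x k A a} : SigWf Δ → lookupSig Δ x = none →
        Typing Δ [] a k A → SigWf ((x, k, A, a) :: Δ)

  /-- Well-formed contexts `Δ ⊢ Γ`. -/
  inductive CtxWf : Sig → Ctx → Prop
    | nil {Δ} : SigWf Δ → CtxWf Δ []
    | cons {Δ Γ x k A} : CtxWf Δ Γ → lookupCtx Γ x = none →
        Typing Δ Γ A k .star → CtxWf Δ ((x, k, A) :: Γ)

  /-- Level-annotated typing `Δ; Γ ⊢ a :^k A` of full StraTT. -/
  inductive Typing : Sig → Ctx → Tm → ℕ → Tm → Prop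
    | star {Δ Γ k} : CtxWf Δ Γ → Typing Δ Γ .star k .star
    | var {Δ Γ x j k A} : CtxWf Δ Γ → lookupCtx Γ x = some (j, A) → j ≤ k →
        Typing Δ Γ (.var x) k A
    | const {Δ Γ x i j k A a} : CtxWf Δ Γ → lookupSig Δ x = some (j, A, a) →
        i + j ≤ k → Typing Δ Γ (.const x i) k (Tm.incr i A)
    | pi {Δ Γ j k x A B} : j < k → Typing Δ Γ A j .star →
        Typing Δ ((x, j, A) :: Γ) B k .star → Typing Δ Γ (.pi j x A B) k .star
    | lamPi {Δ Γ j k x A B b} : j < k → Typing Δ Γ A j .star →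
        Typing Δ ((x, j, A) :: Γ) b k B → Typing Δ Γ (.lam x b) k (.pi j x A B)
    | appPi {Δ Γ j k x A B b a} : Typing Δ Γ b k (.pi j x A B) → Typing Δ Γ a j A →
        Typing Δ Γ (.app b a) k (Tm.subst x a B)
    | arrow {Δ Γ k A B} : Typing Δ Γ A k .star → Typing Δ Γ B k .star →
        Typing Δ Γ (.arrow A B) k .star
    | lamArrow {Δ Γ k x A B b} : Typing Δ Γ A k .star → Typing Δ Γ B k .star →
        Typing Δ ((x, k, A) :: Γ) b k B → Typing Δ Γ (.lam x b) k (.arrow A B)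
    | appArrow {Δ Γ k A B b a} : Typing Δ Γ b k (.arrow A B) → Typing Δ Γ a k A →
        Typing Δ Γ (.app b a) k B
    | bot {Δ Γ k} : CtxWf Δ Γ → Typing Δ Γ .bot k .star
    | absurd {Δ Γ k b A} : Typing Δ Γ b k .bot → Typing Δ Γ A k .star →
        Typing Δ Γ (.absurd b) k A
    | conv {Δ Γ k a A B} : Typing Δ Γ a k A → DEq Δ A B →
        Typing Δ Γ B k .star → Typing Δ Γ a k B
end

section Cumulativity

/-- All top-level `Π` annotations of a type are below `m`. -/
def Good (m : ℕ) : Tm → Prop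
  | .pi j _ _ B => j < m ∧ Good m B
  | .arrow _ B => Good m B
  | _ => True

lemma good_mono {m m' : ℕ} (h : m ≤ m') : ∀ {T : Tm}, Good m T → Good m' T := by
  intro T
  induction T with
  | pi j x A B ihA ihB => exact fun hg => ⟨lt_of_lt_of_le hg.1 h, ihB hg.2⟩
  | arrow A B ihA ihB => exact fun hg => ihB hg
  | _ => exact fun _ => trivial

lemma good_incr {m i : ℕ} : ∀ {T : Tm}, Good m T → Good (i + m) (Tm.incr i T) := by
  intro T
  induction T with
  | pi j x A B ihA ihB =>
      exact fun hg => ⟨Nat.add_lt_add_left hg.1 i, ihB hg.2⟩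
  | arrow A B ihA ihB => exact fun hg => ihB hg
  | _ => exact fun _ => trivial

lemma good_subst {m x : ℕ} {a : Tm} (ha : Good m a) :
    ∀ {B : Tm}, Good m B → Good m (Tm.subst x a B) := by
  intro B
  induction B with
  | var y =>
      intro _
      simp only [Tm.subst]
      split
      · exact ha
      · trivial
  | pi j y A B ihA ihB =>
      intro hg
      refine ⟨hg.1, ?_⟩
      show Good m (if y = x then B else Tm.subst x a B)
      split
      · exact hg.2
      · exact ihB hg.2
  | arrow A B ihA ihB => exact fun hg => ihB hg
  | _ => exact fun _ => trivial

/-- Subjects of typing judgements are `Good`. -/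
lemma goodSubj {Δ Γ b m A} (h : Typing Δ Γ b m A) : Good m b := by
  refine Typing.rec (motive_1 := fun _ _ => True) (motive_2 := fun _ _ _ => True)
    (motive_3 := fun _ _ b m _ _ => Good m b)
    ?_ ?_ ?_ ?_ ?_ ?_ ?_ ?_ ?_ ?_ ?_ ?_ ?_ ?_ ?_ ?_ h
  · trivial
  · intros; trivial
  · intros; trivial
  · intros; trivial
  · intros; trivial
  · intros; trivial
  · intros; trivial
  · intro Δ Γ j k x A B hj hA hB ihA ihB; exact ⟨hj, ihB⟩
  · intros; trivial
  · intros; trivial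
  · intro Δ Γ k A B hA hB ihA ihB; exact ihB
  · intros; trivial
  · intros; trivial
  · intros; trivial
  · intros; trivial
  · intro Δ Γ k a A B h1 h2 h3 ih1 ih3; exact ih1

/-- Regularity-lite: the type of any typed term is `Good`. -/
lemma reg {Δ Γ b m A} (h : Typing Δ Γ b m A) : Good m A := by
  refine Typing.rec
    (motive_1 := fun Δ _ => ∀ x j0 A0 a0, lookupSig Δ x = some (j0, A0, a0) → Good j0 A0)
    (motive_2 := fun Δ Γ _ =>
      (∀ x j0 A0 a0, lookupSig Δ x = some (j0, A0, a0) → Good j0 A0) ∧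
      (∀ x l A, lookupCtx Γ x = some (l, A) → Good l A))
    (motive_3 := fun _ _ _ m A _ => Good m A)
    ?_ ?_ ?_ ?_ ?_ ?_ ?_ ?_ ?_ ?_ ?_ ?_ ?_ ?_ ?_ ?_ h
  · intro x j0 A0 a0 hl; simp [lookupSig] at hl
  · intro Δ x k A a hs hn ht ihs iht y j0 A0 a0 hl
    simp only [lookupSig] at hl
    split at hl
    · obtain ⟨rfl, rfl, rfl⟩ : j0 = k ∧ A0 = A ∧ a0 = a := by
        refine ⟨?_, ?_, ?_⟩ <;> cases hl <;> rfl
      exact iht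
    · exact ihs _ _ _ _ hl
  · intro Δ hs ihs
    exact ⟨ihs, fun x l A hl => by simp [lookupCtx] at hl⟩
  · intro Δ Γ x k A hc hn hA ihc ihA
    refine ⟨ihc.1, fun y l B hl => ?_⟩
    simp only [lookupCtx] at hl
    split at hl
    · obtain ⟨rfl, rfl⟩ : l = k ∧ B = A := by
        refine ⟨?_, ?_⟩ <;> cases hl <;> rfl
      exact goodSubj hA
    · exact ihc.2 _ _ _ hl
  · intros; trivial
  · intro Δ Γ x l m A hc hl hle ihc; exact good_mono hle (ihc.2 _ _ _ hl)
  · intro Δ Γ x i j0 m A a hc hl hle ihc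
    exact good_mono hle (good_incr (ihc.1 _ _ _ _ hl))
  · intros; trivial
  · intro Δ Γ j0 m x A B b hj hA hb ihA ihb
    exact show j0 < m ∧ Good m B from ⟨hj, ihb⟩
  · intro Δ Γ j0 m x A B b a hb ha ihb iha
    have hb' : j0 < m ∧ Good m B := ihb
    exact good_subst (good_mono (le_of_lt hb'.1) (goodSubj ha)) hb'.2
  · intros; trivial
  · intro Δ Γ m x A B b hA hB hb ihA ihB ihb
    exact show Good m B from goodSubj hB
  · intro Δ Γ m A B b a hb ha ihb iha; exact ihb
  · intros; trivial
  · intro Δ Γ m b A hb hA ihb ihA; exact goodSubj hA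
  · intro Δ Γ m a A B h1 h2 h3 ih1 ih3; exact goodSubj h3

/-- Lifting of (a suffix of) a context: entries at level `j` may be raised to `k`,
after which only entries of level `< j` (or further lifted ones) may follow. -/
inductive Lift (j k : ℕ) : Ctx → Ctx → Prop
  | refl (Γ) : Lift j k Γ Γ
  | lift {Γ Γ' x A} : Lift j k Γ Γ' → Lift j k ((x, j, A) :: Γ) ((x, k, A) :: Γ')
  | low {Γ Γ' x l A} : Lift j k Γ Γ' → l < j → Lift j k ((x, l, A) :: Γ) ((x, l, A) :: Γ')

lemma lift_lookup_none {j k : ℕ} {Γ Γ' : Ctx} (h : Lift j k Γ Γ') :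
    ∀ {x}, lookupCtx Γ x = none → lookupCtx Γ' x = none := by
  induction h with
  | refl => exact fun h => h
  | lift h ih =>
      rename_i Γ Γ' y A
      intro x hn
      by_cases hx : x = y
      · simp [lookupCtx, hx] at hn
      · simp only [lookupCtx, if_neg hx] at hn ⊢; exact ih hn
  | low h hl ih =>
      rename_i Γ Γ' y l A
      intro x hn
      by_cases hx : x = y
      · simp [lookupCtx, hx] at hn
      · simp only [lookupCtx, if_neg hx] at hn ⊢; exact ih hn

lemma lift_lookup_some {j k : ℕ} {Γ Γ' : Ctx} (h : Lift j k Γ Γ') :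
    ∀ {x l A}, lookupCtx Γ x = some (l, A) →
      lookupCtx Γ' x = some (l, A) ∨ (l = j ∧ lookupCtx Γ' x = some (k, A)) := by
  induction h with
  | refl => exact fun h => Or.inl h
  | lift h ih =>
      rename_i Γ Γ' y A0
      intro x l A hl
      by_cases hx : x = y
      · simp only [lookupCtx, if_pos hx] at hl
        obtain ⟨rfl, rfl⟩ : l = j ∧ A = A0 := by
          refine ⟨?_, ?_⟩ <;> cases hl <;> rfl
        exact Or.inr ⟨rfl, by simp [lookupCtx, if_pos hx]⟩
      · simp only [lookupCtx, if_neg hx] at hl ⊢; exact ih hl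
  | low h hlow ih =>
      rename_i Γ Γ' y l0 A0
      intro x l A hl
      by_cases hx : x = y
      · simp only [lookupCtx, if_pos hx] at hl ⊢; exact Or.inl hl
      · simp only [lookupCtx, if_neg hx] at hl ⊢; exact ih hl

lemma lv_self {m j k : ℕ} (hjk : j ≤ k) (hm : m ≤ j) : m ≤ if m < j then m else k := by
  split <;> omega

/-- The restricted floating lemma / main induction for cumulativity. -/
lemma mainT {j k : ℕ} (hjk : j ≤ k) {Δ Γ a m A} (h : Typing Δ Γ a m A) :
    m ≤ j → ∀ Γ', Lift j k Γ Γ' → Typing Δ Γ' a (if m < j then m else k) A := by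
  refine Typing.rec (motive_1 := fun _ _ => True)
    (motive_2 := fun Δ Γ _ => ∀ Γ', Lift j k Γ Γ' → CtxWf Δ Γ')
    (motive_3 := fun Δ Γ a m A _ =>
      m ≤ j → ∀ Γ', Lift j k Γ Γ' → Typing Δ Γ' a (if m < j then m else k) A)
    ?_ ?_ ?_ ?_ ?_ ?_ ?_ ?_ ?_ ?_ ?_ ?_ ?_ ?_ ?_ ?_ h
  · trivial
  · intros; trivial
  · intro Δ hs _ Γ' hl
    cases hl
    exact CtxWf.nil hs
  · intro Δ Γ x l A hc hn hA ihc ihA Γ' hl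
    cases hl with
    | refl => exact CtxWf.cons hc hn hA
    | lift hl' =>
        refine CtxWf.cons (ihc _ hl') (lift_lookup_none hl' hn) ?_
        have := ihA le_rfl _ hl'
        simpa using this
    | low hl' hlt =>
        refine CtxWf.cons (ihc _ hl') (lift_lookup_none hl' hn) ?_
        have := ihA (le_of_lt hlt) _ hl'
        simpa [hlt] using this
  · intro Δ Γ m hc ihc hm Γ' hl
    exact Typing.star (ihc _ hl)
  · intro Δ Γ x l m A hc hlook hle ihc hm Γ' hl
    rcases lift_lookup_some hl hlook with h' | ⟨hlj, h'⟩
    · exact Typing.var (ihc _ hl) h' (le_trans hle (lv_self hjk hm))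
    · have hmj : m = j := le_antisymm hm (hlj ▸ hle)
      subst hmj
      exact Typing.var (ihc _ hl) h' (by simp)
  · intro Δ Γ x i l m A a hc hlook hle ihc hm Γ' hl
    exact Typing.const (ihc _ hl) hlook (le_trans hle (lv_self hjk hm))
  · intro Δ Γ j0 m x A B hj0 hA hB ihA ihB hm Γ' hl
    have hj0j : j0 < j := lt_of_lt_of_le hj0 hm
    have hA' := ihA (le_of_lt hj0j) _ hl
    rw [if_pos hj0j] at hA'
    exact Typing.pi (lt_of_lt_of_le hj0 (lv_self hjk hm)) hA' (ihB hm _ (Lift.low hl hj0j))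
  · intro Δ Γ j0 m x A B b hj0 hA hb ihA ihb hm Γ' hl
    have hj0j : j0 < j := lt_of_lt_of_le hj0 hm
    have hA' := ihA (le_of_lt hj0j) _ hl
    rw [if_pos hj0j] at hA'
    exact Typing.lamPi (lt_of_lt_of_le hj0 (lv_self hjk hm)) hA' (ihb hm _ (Lift.low hl hj0j))
  · intro Δ Γ j0 m x A B b a hb ha ihb iha hm Γ' hl
    have hg : j0 < m ∧ Good m B := reg hb
    have hj0 : j0 < m := hg.1
    have hj0j : j0 < j := lt_of_lt_of_le hj0 hm
    have ha' := iha (le_of_lt hj0j) _ hl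
    rw [if_pos hj0j] at ha'
    exact Typing.appPi (ihb hm _ hl) ha'
  · intro Δ Γ m A B hA hB ihA ihB hm Γ' hl
    exact Typing.arrow (ihA hm _ hl) (ihB hm _ hl)
  · intro Δ Γ m x A B b hA hB hb ihA ihB ihb hm Γ' hl
    by_cases hmj : m < j
    · have hb' := ihb hm _ (Lift.low hl hmj)
      rw [if_pos hmj] at hb' ⊢
      have hA' := ihA hm _ hl; rw [if_pos hmj] at hA'
      have hB' := ihB hm _ hl; rw [if_pos hmj] at hB'
      exact Typing.lamArrow hA' hB' hb'
    · have hmj' : m = j := le_antisymm hm (not_lt.mp hmj)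
      subst hmj'
      have hb' := ihb le_rfl _ (Lift.lift hl)
      rw [if_neg hmj] at hb' ⊢
      have hA' := ihA le_rfl _ hl; rw [if_neg hmj] at hA'
      have hB' := ihB le_rfl _ hl; rw [if_neg hmj] at hB'
      exact Typing.lamArrow hA' hB' hb'
  · intro Δ Γ m A B b a hb ha ihb iha hm Γ' hl
    exact Typing.appArrow (ihb hm _ hl) (iha hm _ hl)
  · intro Δ Γ m hc ihc hm Γ' hl
    exact Typing.bot (ihc _ hl)
  · intro Δ Γ m b A hb hA ihb ihA hm Γ' hl
    exact Typing.absurd (ihb hm _ hl) (ihA hm _ hl)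
  · intro Δ Γ m a A B h1 hdeq h3 ih1 ih3 hm Γ' hl
    exact Typing.conv (ih1 hm _ hl) hdeq (ih3 hm _ hl)

end Cumulativity

/-- **Cumulativity (full StraTT, including floating nondependent functions)**:
if `Δ; Γ ⊢ a :^j A` and `j ≤ k` then `Δ; Γ ⊢ a :^k A`. -/
theorem stratt_cumulativity {Δ : Sig} {Γ : Ctx} {a A : Tm} {j k : ℕ}
    (h : Typing Δ Γ a j A) (hjk : j ≤ k) : Typing Δ Γ a k A := by
  have := mainT hjk h le_rfl Γ (Lift.refl Γ)
  simpa using this
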